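/- Corollary 2.6 (reverse triangle inequality): let M ≥ m > 0 and x, y, z ∈ X with Re(My − x, x − my | z) ≥ 0. Then 0 ≤ ‖x|z‖ + ‖y|z‖ − ‖x + y|z‖ ≤ ((√M − √m)/(mM)^{1/4})·√(Re(x, y | z)). -/
import Mathlib


open RCLike

/-- A 2-inner product space over `𝕜 = ℝ` or `ℂ`. -/
structure TwoIP (𝕜 : Type) (X : Type) [RCLike 𝕜] [AddCommGroup X] [Module 𝕜 X] where
  ip : X → X → X → 𝕜
  re_nonneg : ∀ x z : X, 0 ≤ re (ip x x z)
  im_zero : ∀ x z : X, im (ip x x z) = 0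
  eq_zero_iff : ∀ x z : X, ip x x z = 0 ↔ ¬ LinearIndependent 𝕜 ![x, z]
  swap : ∀ x z : X, ip x x z = ip z z x
  conj_symm : ∀ x y z : X, ip x y z = (starRingEnd 𝕜) (ip y x z)
  smul_left : ∀ (α : 𝕜) (x y z : X), ip (α • x) y z = α * ip x y z
  add_left : ∀ x x' y z : X, ip (x + x') y z = ip x y z + ip x' y z

section Aux

variable {𝕜 X : Type} [RCLike 𝕜] [AddCommGroup X] [Module 𝕜 X] (T : TwoIP 𝕜 X)

lemma TwoIP.add_right (u v w z : X) : T.ip u (v + w) z = T.ip u v z + T.ip u w z := by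
  rw [T.conj_symm, T.add_left, map_add, ← T.conj_symm, ← T.conj_symm]

lemma TwoIP.smul_right (α : 𝕜) (u v z : X) :
    T.ip u (α • v) z = (starRingEnd 𝕜) α * T.ip u v z := by
  rw [T.conj_symm, T.smul_left, map_mul, ← T.conj_symm]

lemma TwoIP.sub_left (u v w z : X) : T.ip (u - v) w z = T.ip u w z - T.ip v w z := by
  rw [sub_eq_add_neg, T.add_left, ← neg_one_smul 𝕜 v, T.smul_left]; ring

lemma TwoIP.sub_right (u v w z : X) : T.ip u (v - w) z = T.ip u v z - T.ip u w z := by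
  rw [T.conj_symm, T.sub_left, map_sub, ← T.conj_symm, ← T.conj_symm]

lemma TwoIP.re_symm (u v z : X) : re (T.ip u v z) = re (T.ip v u z) := by
  rw [T.conj_symm, conj_re]

lemma TwoIP.expand (t : ℝ) (x y z : X) :
    re (T.ip (x + (t : 𝕜) • y) (x + (t : 𝕜) • y) z)
      = re (T.ip x x z) + 2 * t * re (T.ip x y z) + t ^ 2 * re (T.ip y y z) := by
  rw [T.add_left, T.add_right, T.add_right, T.smul_left, T.smul_right, T.smul_right,
    T.smul_left, conj_ofReal]
  have hre : re (T.ip y x z) = re (T.ip x y z) := T.re_symm y x z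
  simp only [map_add, re_ofReal_mul, hre]
  ring

lemma TwoIP.cs (x y z : X) : (re (T.ip x y z)) ^ 2 ≤ re (T.ip x x z) * re (T.ip y y z) := by
  have key : ∀ t : ℝ, 0 ≤ re (T.ip y y z) * (t * t) + (2 * re (T.ip x y z)) * t
      + re (T.ip x x z) := by
    intro t
    have := T.re_nonneg (x + (t : 𝕜) • y) z
    rw [T.expand] at this
    nlinarith [this]
  have hd := discrim_le_zero key
  rw [discrim] at hd
  nlinarith [hd]

set_option maxHeartbeats 1000000 in
/-- pure real-arithmetic core of the corollary -/
lemma real_core (A B P C m M : ℝ) (hA : 0 ≤ A) (hB : 0 ≤ B) (hm : 0 < m) (hM : m ≤ M)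
    (hC : C = A + 2 * P + B) (hCS : P ^ 2 ≤ A * B) (hRev : A + m * M * B ≤ (M + m) * P) :
    0 ≤ Real.sqrt A + Real.sqrt B - Real.sqrt C ∧
    Real.sqrt A + Real.sqrt B - Real.sqrt C
      ≤ ((Real.sqrt M - Real.sqrt m) / (m * M) ^ ((1:ℝ)/4)) * Real.sqrt P := by
  have hmM : (0:ℝ) < m * M := by nlinarith
  have hP : 0 ≤ P := by
    have h0 : 0 ≤ (M + m) * P := le_trans (by nlinarith [mul_nonneg hmM.le hB]) hRev
    nlinarith [h0]
  set a := Real.sqrt A with ha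
  set b := Real.sqrt B with hb
  have ha2 : a ^ 2 = A := Real.sq_sqrt hA
  have hb2 : b ^ 2 = B := Real.sq_sqrt hB
  have ha0 : 0 ≤ a := Real.sqrt_nonneg A
  have hb0 : 0 ≤ b := Real.sqrt_nonneg B
  -- Cauchy-Schwarz in sqrt form
  have hab : P ≤ a * b := by
    have h2 : Real.sqrt (P ^ 2) ≤ Real.sqrt (A * B) := Real.sqrt_le_sqrt hCS
    rw [Real.sqrt_sq hP, Real.sqrt_mul hA] at h2
    exact h2
  have hC0 : 0 ≤ C := by linarith
  set c := Real.sqrt C with hcdef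
  have hc2 : c ^ 2 = C := Real.sq_sqrt hC0
  have hc0 : 0 ≤ c := Real.sqrt_nonneg C
  -- triangle inequality
  have h1 : c ≤ a + b := by
    have hsum : (a + b) ^ 2 = A + 2 * (a * b) + B := by rw [← ha2, ← hb2]; ring
    have hle : C ≤ (a + b) ^ 2 := by rw [hsum]; linarith
    calc c = Real.sqrt C := hcdef
      _ ≤ Real.sqrt ((a + b) ^ 2) := Real.sqrt_le_sqrt hle
      _ = a + b := Real.sqrt_sq (by linarith)
  refine ⟨by linarith, ?_⟩
  -- the reverse inequality
  set s := Real.sqrt (m * M) with hs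
  have hs2 : s ^ 2 = m * M := Real.sq_sqrt hmM.le
  have hs0 : 0 < s := Real.sqrt_pos.mpr hmM
  have hsm : s = Real.sqrt m * Real.sqrt M := Real.sqrt_mul hm.le M
  have hm2 : Real.sqrt m ^ 2 = m := Real.sq_sqrt hm.le
  have hM2 : Real.sqrt M ^ 2 = M := Real.sq_sqrt (hm.le.trans hM)
  clear_value a b c s
  have hamgm : 2 * s * (a * b) ≤ A + m * M * B := by
    have key : A + m * M * B - 2 * s * (a * b) = (a - s * b) ^ 2 := by
      rw [← ha2, ← hb2, ← hs2]; ring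
    nlinarith [sq_nonneg (a - s * b), key]
  set d := a + b - c with hd
  have hd0 : 0 ≤ d := by rw [hd]; linarith
  clear_value d
  have h2 : d ^ 2 ≤ d * (a + b + c) := by nlinarith
  have h3 : d * (a + b + c) = 2 * (a * b) - 2 * P := by
    have e1 : d * (a + b + c) = (a + b) ^ 2 - c ^ 2 := by rw [hd]; ring
    rw [e1, hc2, hC, ← ha2, ← hb2]; ring
  have h4 : s * (2 * (a * b) - 2 * P) ≤ (M + m) * P - 2 * s * P := by nlinarith [hamgm, hRev]
  have h5 : (Real.sqrt M - Real.sqrt m) ^ 2 = M + m - 2 * s := by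
    rw [hsm]; linear_combination hM2 + hm2
  have hdsq : s * d ^ 2 ≤ (Real.sqrt M - Real.sqrt m) ^ 2 * P :=
    calc s * d ^ 2 ≤ s * (d * (a + b + c)) := by
          exact mul_le_mul_of_nonneg_left h2 hs0.le
      _ = s * (2 * (a * b) - 2 * P) := by rw [h3]
      _ ≤ (M + m) * P - 2 * s * P := h4
      _ = (Real.sqrt M - Real.sqrt m) ^ 2 * P := by rw [h5]; ring
  set q := (m * M) ^ ((1:ℝ)/4) with hq
  have hq0 : 0 < q := Real.rpow_pos_of_pos hmM _
  have hq2 : q ^ 2 = s := by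
    rw [hq, ← Real.rpow_natCast ((m * M) ^ ((1:ℝ)/4)) 2, ← Real.rpow_mul hmM.le]
    rw [hs, Real.sqrt_eq_rpow]
    norm_num
  clear_value q
  have hrhs0 : 0 ≤ (Real.sqrt M - Real.sqrt m) / q * Real.sqrt P := by
    have hmm : Real.sqrt m ≤ Real.sqrt M := Real.sqrt_le_sqrt hM
    have : 0 ≤ Real.sqrt M - Real.sqrt m := by linarith
    positivity
  have hP2 : Real.sqrt P ^ 2 = P := Real.sq_sqrt hP
  have hfin : d ^ 2 ≤ ((Real.sqrt M - Real.sqrt m) / q * Real.sqrt P) ^ 2 := by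
    have hexp : ((Real.sqrt M - Real.sqrt m) / q * Real.sqrt P) ^ 2
        = (Real.sqrt M - Real.sqrt m) ^ 2 * P / s := by
      rw [mul_pow, div_pow, hq2, hP2]; ring
    rw [hexp, le_div_iff₀ hs0, mul_comm]
    exact hdsq
  calc d = Real.sqrt (d ^ 2) := (Real.sqrt_sq hd0).symm
    _ ≤ Real.sqrt (((Real.sqrt M - Real.sqrt m) / q * Real.sqrt P) ^ 2) :=
        Real.sqrt_le_sqrt hfin
    _ = (Real.sqrt M - Real.sqrt m) / q * Real.sqrt P := Real.sqrt_sq hrhs0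

end Aux

theorem stmt {𝕜 X : Type} [RCLike 𝕜] [AddCommGroup X] [Module 𝕜 X]
    (T : TwoIP 𝕜 X) (hdim : 1 < Module.rank 𝕜 X) (x y z : X) (m M : ℝ) (hm : 0 < m) (hM : m ≤ M)
    (h : 0 ≤ re (T.ip (((M : ℝ) : 𝕜) • y - x) (x - ((m : ℝ) : 𝕜) • y) z)) :
    0 ≤ Real.sqrt (re (T.ip x x z)) + Real.sqrt (re (T.ip y y z))
        - Real.sqrt (re (T.ip (x + y) (x + y) z)) ∧
    Real.sqrt (re (T.ip x x z)) + Real.sqrt (re (T.ip y y z))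
        - Real.sqrt (re (T.ip (x + y) (x + y) z))
      ≤ ((Real.sqrt M - Real.sqrt m) / (m * M) ^ ((1:ℝ)/4)) * Real.sqrt (re (T.ip x y z)) := by
  set A := re (T.ip x x z) with hA
  set B := re (T.ip y y z) with hB
  set P := re (T.ip x y z) with hP
  have hA0 : 0 ≤ A := T.re_nonneg x z
  have hB0 : 0 ≤ B := T.re_nonneg y z
  have hCeq : re (T.ip (x + y) (x + y) z) = A + 2 * P + B := by
    have := T.expand 1 x y z
    simpa using this
  have hCS : P ^ 2 ≤ A * B := T.cs x y z
  have hre : re (T.ip y x z) = re (T.ip x y z) := T.re_symm y x z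
  have hRev : A + m * M * B ≤ (M + m) * P := by
    have hcalc : re (T.ip (((M : ℝ) : 𝕜) • y - x) (x - ((m : ℝ) : 𝕜) • y) z)
        = (M + m) * P - A - m * M * B := by
      simp only [T.sub_left, T.sub_right, T.smul_left, T.smul_right, conj_ofReal,
        map_sub, re_ofReal_mul, hre]
      rw [← hA, ← hB, ← hP]
      ring
    rw [hcalc] at h
    linarith
  rw [hCeq]
  exact real_core A B P (A + 2 * P + B) m M hA0 hB0 hm hM rfl hCS hRev
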